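/- arXiv:2009.12667 — 4 statements merged into one kernel-verified Lean document; each statement's English description precedes it below -/
import Mathlib

section
/- For any i ≠ j, if the (j,i) block of (I−H)^* D (I−H) is nonzero, then H(j,i) ≠ 0, or H(i,j) ≠ 0, or there exists k with both H(k,j) ≠ 0 and H(k,i) ≠ 0. (Equivalently: if H(j,i) = 0, H(i,j) = 0, and for every k either H(k,j) = 0 or H(k,i) = 0, then the (j,i) block of (I−H)^* D (I−H) is the zero T×T matrix.) -/
open Matrix

/-- The `(m·T) × (m·T)` block matrix with `(i,j)` block `H i j`. -/
def ofBlocks {m T : ℕ} (H : Fin m → Fin m → Matrix (Fin T) (Fin T) ℂ) :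
    Matrix (Fin m × Fin T) (Fin m × Fin T) ℂ :=
  Matrix.of fun p q => H p.1 q.1 p.2 q.2

/-- The block-diagonal `(m·T) × (m·T)` matrix with diagonal blocks `D i`. -/
def blkDiag {m T : ℕ} (D : Fin m → Matrix (Fin T) (Fin T) ℂ) :
    Matrix (Fin m × Fin T) (Fin m × Fin T) ℂ :=
  Matrix.of fun p q => if p.1 = q.1 then D p.1 p.2 q.2 else 0

/-- The `(i,j)` block (of size `T × T`) of an `(m·T) × (m·T)` matrix. -/
def blk {m T : ℕ} (A : Matrix (Fin m × Fin T) (Fin m × Fin T) ℂ) (i j : Fin m) :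
    Matrix (Fin T) (Fin T) ℂ :=
  Matrix.of fun a b => A (i, a) (j, b)

/-- Moral-graph theorem: a nonzero `(j,i)` block of `(I − H)ᴴ D (I − H)` forces a
parent, child, or spouse relation between nodes `i` and `j`. -/
theorem moral_graph {m T : ℕ}
    (H : Fin m → Fin m → Matrix (Fin T) (Fin T) ℂ)
    (hHdiag : ∀ i, H i i = 0)
    (D : Fin m → Matrix (Fin T) (Fin T) ℂ)
    (i j : Fin m) (hij : i ≠ j)
    (hne : blk ((1 - ofBlocks H)ᴴ * blkDiag D * (1 - ofBlocks H)) j i ≠ 0) :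
    H j i ≠ 0 ∨ H i j ≠ 0 ∨ ∃ k, H k j ≠ 0 ∧ H k i ≠ 0 := by
  by_contra hcon
  push_neg at hcon
  obtain ⟨h1, h2, h3⟩ := hcon
  apply hne
  ext a b
  simp only [blk, Matrix.of_apply, Matrix.mul_apply, conjTranspose_apply,
    Matrix.sub_apply, Matrix.one_apply, ofBlocks, blkDiag, Matrix.zero_apply]
  apply Finset.sum_eq_zero
  intro p _
  rcases eq_or_ne p.1 j with hpj | hpj
  · have hz : (if p = (i, b) then (1:ℂ) else 0) - H p.1 i p.2 b = 0 := by
      have hne' : p ≠ (i, b) := by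
        intro h; apply hij; rw [← hpj, h]
      rw [if_neg hne', hpj, h1]
      simp
    rw [hz, mul_zero]
  · rcases eq_or_ne (H p.1 j) 0 with hHpj | hHpj
    · have hin : (∑ x : Fin m × Fin T, star ((if x = (j, a) then (1:ℂ) else 0) - H x.1 j x.2 a) * if x.1 = p.1 then D x.1 x.2 p.2 else 0) = 0 := by
        apply Finset.sum_eq_zero
        intro x _
        rcases eq_or_ne x.1 p.1 with hxp | hxp
        · have hxj : x ≠ (j, a) := by
            intro h; apply hpj; rw [← hxp, h]
          rw [if_neg hxj, hxp, hHpj]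
          simp
        · rw [if_neg hxp, mul_zero]
      rw [hin, zero_mul]
    · have hpi : p.1 ≠ i := by
        intro h; apply hHpj; rw [h, h2]
      have hz : (if p = (i, b) then (1:ℂ) else 0) - H p.1 i p.2 b = 0 := by
        have hne' : p ≠ (i, b) := by
          intro h; apply hpi; rw [h]
        rw [if_neg hne', h3 p.1 hHpj]
        simp
      rw [hz, mul_zero]
end

section
/- Suppose i ≠ j, H(j,i) = 0, H(i,j) = 0, each diagonal block D(k) is Hermitian positive semidefinite, and there is an index k₀ such that for every k ≠ k₀ either H(k,j) = 0 or H(k,i) = 0, while H(k₀,j) = b_j • N and H(k₀,i) = b_i • N for some complex scalars b_j, b_i and some T×T complex matrix N. Then the (j,i) block of (I−H)^* D (I−H) equals (conj(b_j)·b_i) • (N^* D(k₀) N), the matrix N^* D(k₀) N is Hermitian positive semidefinite, and consequently every eigenvalue of this (j,i) block has the form (conj(b_j)·b_i)·r for some real r ≥ 0 (so all nonzero eigenvalues share the same argument, independent of the data). -/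
/-!
Since `H(i,j) = H(j,i) = 0`, the `(j,i)` block of `(I − H)ᴴ D (I − H)` is
`∑ₖ H(k,j)ᴴ D(k) H(k,i)`, and only the `k₀` term survives. If `v` is an eigenvector of
`c • M` with `M ⪰ 0` and eigenvalue `μ`, then `μ ⟪v, v⟫ = c ⟪v, M v⟫`, so `μ` is `c` times
the nonnegative Rayleigh quotient of `M` at `v`.
-/

open Matrix ComplexOrder

section Blocks

variable {m T : ℕ}

theorem blk_conjTranspose_mul_blkDiag_mul (A B : Matrix (Fin m × Fin T) (Fin m × Fin T) ℂ)
    (D : Fin m → Matrix (Fin T) (Fin T) ℂ) (i j : Fin m) :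
    blk (Aᴴ * blkDiag D * B) i j = ∑ k, (blk A k i)ᴴ * D k * blk B k j := by
  ext a b
  simp only [blk, blkDiag, of_apply, mul_apply, conjTranspose_apply, Matrix.sum_apply,
    Fintype.sum_prod_type]
  refine Finset.sum_congr rfl fun k _ => Finset.sum_congr rfl fun c _ => ?_
  congr 1
  simp [mul_ite]

theorem blk_one_sub_ofBlocks (H : Fin m → Fin m → Matrix (Fin T) (Fin T) ℂ) (k j : Fin m) :
    blk (1 - ofBlocks H) k j = (if k = j then 1 else 0) - H k j := by
  ext a b
  by_cases hkj : k = j <;> simp [blk, ofBlocks, one_apply, hkj]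

theorem blk_one_sub_ofBlocks_gram {H : Fin m → Fin m → Matrix (Fin T) (Fin T) ℂ}
    (D : Fin m → Matrix (Fin T) (Fin T) ℂ) {i j : Fin m} (hij : i ≠ j)
    (hHji : H j i = 0) (hHij : H i j = 0) :
    blk ((1 - ofBlocks H)ᴴ * blkDiag D * (1 - ofBlocks H)) j i =
      ∑ k, (H k j)ᴴ * D k * H k i := by
  rw [blk_conjTranspose_mul_blkDiag_mul]
  refine Finset.sum_congr rfl fun k _ => ?_
  simp only [blk_one_sub_ofBlocks]
  by_cases hkj : k = j
  · subst hkj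
    simp [hHji, hij.symm]
  by_cases hki : k = i
  · subst hki
    simp [hHij, hkj]
  simp [hkj, hki]

end Blocks

theorem Matrix.exists_mulVec_eq_smul_of_mem_spectrum {K n : Type*} [Field K] [Fintype n]
    [DecidableEq n] {A : Matrix n n K} {μ : K} (hμ : μ ∈ spectrum K A) :
    ∃ v ≠ 0, A *ᵥ v = μ • v := by
  rw [← spectrum_toLin', ← Module.End.hasEigenvalue_iff_mem_spectrum] at hμ
  obtain ⟨v, hv⟩ := hμ.exists_hasEigenvector
  exact ⟨v, hv.2, by simpa using hv.apply_eq_smul⟩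

theorem Matrix.PosSemidef.mem_spectrum_smul {n : Type*} [Fintype n] [DecidableEq n]
    {M : Matrix n n ℂ} (hM : M.PosSemidef) (c : ℂ) {μ : ℂ} (hμ : μ ∈ spectrum ℂ (c • M)) :
    ∃ r : ℝ, 0 ≤ r ∧ μ = c * r := by
  obtain ⟨v, hv, hMv⟩ := exists_mulVec_eq_smul_of_mem_spectrum hμ
  have hs : 0 < star v ⬝ᵥ v := dotProduct_star_self_pos_iff.mpr hv
  have hrayleigh : μ * (star v ⬝ᵥ v) = c * (star v ⬝ᵥ (M *ᵥ v)) := by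
    rw [← smul_eq_mul, ← dotProduct_smul, ← hMv, smul_mulVec, dotProduct_smul, smul_eq_mul]
  obtain ⟨r, hr, hr_eq⟩ := RCLike.nonneg_iff_exists_ofReal.mp
    (div_nonneg (hM.dotProduct_mulVec_nonneg v) hs.le)
  refine ⟨r, hr, ?_⟩
  rw [show (r : ℂ) = _ from hr_eq, ← mul_div_assoc, ← hrayleigh, mul_div_cancel_right₀ _ hs.ne']

theorem strict_spouse_block_constant_phase_general {m T : ℕ}
    (H : Fin m → Fin m → Matrix (Fin T) (Fin T) ℂ)
    (D : Fin m → Matrix (Fin T) (Fin T) ℂ)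
    (hD : ∀ k, (D k).PosSemidef)
    (i j : Fin m) (hij : i ≠ j)
    (hji : H j i = 0) (hijz : H i j = 0)
    (k₀ : Fin m) (bj bi : ℂ) (N : Matrix (Fin T) (Fin T) ℂ)
    (honechild : ∀ k, k ≠ k₀ → H k j = 0 ∨ H k i = 0)
    (hkj : H k₀ j = bj • N) (hki : H k₀ i = bi • N) :
    blk ((1 - ofBlocks H)ᴴ * blkDiag D * (1 - ofBlocks H)) j i =
      (starRingEnd ℂ bj * bi) • (Nᴴ * D k₀ * N) ∧
    (Nᴴ * D k₀ * N).PosSemidef ∧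
    ∀ μ ∈ spectrum ℂ (blk ((1 - ofBlocks H)ᴴ * blkDiag D * (1 - ofBlocks H)) j i),
      ∃ r : ℝ, 0 ≤ r ∧ μ = (starRingEnd ℂ bj * bi) * r := by
  have hblock : blk ((1 - ofBlocks H)ᴴ * blkDiag D * (1 - ofBlocks H)) j i =
      (starRingEnd ℂ bj * bi) • (Nᴴ * D k₀ * N) := by
    rw [blk_one_sub_ofBlocks_gram D hij hji hijz, Finset.sum_eq_single k₀]
    · rw [hkj, hki, conjTranspose_smul, Matrix.smul_mul, Matrix.smul_mul, Matrix.mul_smul,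
        smul_smul, starRingEnd_apply]
    · intro k _ hk
      rcases honechild k hk with h | h <;> simp [h]
    · simp
  have hpsd : (Nᴴ * D k₀ * N).PosSemidef := (hD k₀).conjTranspose_mul_mul_same N
  refine ⟨hblock, hpsd, fun μ hμ => ?_⟩
  rw [hblock] at hμ
  exact hpsd.mem_spectrum_smul _ hμ

/-- Pruning theorem (single common child): for strict spouses `i, j` whose only
common child `k₀` has coupling blocks `b_j • N` and `b_i • N`, the `(j,i)` block
of `(I − H)ᴴ D (I − H)` equals `(conj b_j · b_i) • (Nᴴ D(k₀) N)`, a complex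
scalar multiple of a Hermitian positive semidefinite matrix; hence every
eigenvalue of that block lies on the ray through `conj b_j · b_i`. -/
theorem strict_spouse_block_constant_phase {m T : ℕ}
    (H : Fin m → Fin m → Matrix (Fin T) (Fin T) ℂ)
    (hHdiag : ∀ i, H i i = 0)
    (D : Fin m → Matrix (Fin T) (Fin T) ℂ)
    (hD : ∀ k, (D k).PosSemidef)
    (i j : Fin m) (hij : i ≠ j)
    (hji : H j i = 0) (hijz : H i j = 0)
    (k₀ : Fin m) (bj bi : ℂ) (N : Matrix (Fin T) (Fin T) ℂ)
    (honechild : ∀ k, k ≠ k₀ → H k j = 0 ∨ H k i = 0)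
    (hkj : H k₀ j = bj • N) (hki : H k₀ i = bi • N) :
    blk ((1 - ofBlocks H)ᴴ * blkDiag D * (1 - ofBlocks H)) j i =
      (starRingEnd ℂ bj * bi) • (Nᴴ * D k₀ * N) ∧
    (Nᴴ * D k₀ * N).PosSemidef ∧
    ∀ μ ∈ spectrum ℂ (blk ((1 - ofBlocks H)ᴴ * blkDiag D * (1 - ofBlocks H)) j i),
      ∃ r : ℝ, 0 ≤ r ∧ μ = (starRingEnd ℂ bj * bi) * r :=
  strict_spouse_block_constant_phase_general H D hD i j hij hji hijz k₀ bj bi N honechild hkj hki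
end

section
/- Let a, b ∈ O be distinct observed vertices. Then the following are equivalent: (1) there exist distinct c, d ∈ O with c, d ∉ {a, b} such that {a, b} separates c from d in G_c (i.e., every walk from c to d in G_c passes through a or b); (2) a and b are adjacent in G_T and both a and b have degree at least 2 in G_T. -/
/-!
Cutting the tree edge `ab` splits `G_T` into an `a`-side and a `b`-side, and the distance between
vertices on opposite sides is computed through `ab`. A `G_c`-edge joins vertices within distance
two of each other or of a common hidden vertex, and no hidden vertex is `a` or `b`, so every
`G_c`-edge across the cut has `a` or `b` as an end. When `a` and `b` both have another neighbour,
each side contains an observed vertex other than `a` and `b`: a hidden neighbour is not a leaf,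
so it has an observed neighbour beyond it.

Conversely, follow the tree path from `c` to `d`, skipping `a`, `b` and hidden vertices. Hidden
vertices are far apart, so a skipped run has at most three vertices, and it is bridged in `G_c`
by a jump of length two or through a hidden vertex of the run, unless `a` and `b` are
consecutive interior vertices of the path, i.e. `ab` is an edge between two non-leaves.
-/

def Gc {V : Type*} (G : SimpleGraph V) (HidS : Set V) :
    SimpleGraph {v : V // v ∉ HidS} where
  Adj a b := a ≠ b ∧ (G.dist a.1 b.1 ≤ 2 ∨
    ∃ l ∈ HidS, G.dist a.1 l ≤ 2 ∧ G.dist b.1 l ≤ 2)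
  symm := by
    constructor
    rintro a b ⟨hab, h⟩
    refine ⟨hab.symm, ?_⟩
    rcases h with h | ⟨l, hl, h1, h2⟩
    · exact Or.inl (by rwa [SimpleGraph.dist_comm])
    · exact Or.inr ⟨l, hl, h2, h1⟩
  loopless := by constructor; rintro a ⟨h, -⟩; exact h rfl

namespace SimpleGraph

variable {V : Type*} {G : SimpleGraph V}

lemma dist_le_two_of_adj {x y : V} (h : G.Adj x y) : G.dist x y ≤ 2 :=
  (dist_eq_one_iff_adj.mpr h).trans_le one_le_two

lemma dist_le_two_of_adj_of_adj {x y z : V} (h₁ : G.Adj x y) (h₂ : G.Adj y z) :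
    G.dist x z ≤ 2 :=
  G.dist_le (h₁.toWalk.concat h₂)

lemma two_le_degree_of_adj_of_adj {v x y : V} [Fintype (G.neighborSet v)]
    (hx : G.Adj v x) (hy : G.Adj v y) (hxy : x ≠ y) : 2 ≤ G.degree v :=
  Finset.one_lt_card.mpr ⟨x, by simpa using hx, y, by simpa using hy, hxy⟩

lemma exists_adj_ne_of_two_le_degree {v : V} [Fintype (G.neighborSet v)]
    (h : 2 ≤ G.degree v) (y : V) : ∃ x, G.Adj v x ∧ x ≠ y := by
  obtain ⟨x, hx, hxy⟩ := Finset.exists_mem_ne h y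
  exact ⟨x, (mem_neighborFinset G v x).mp hx, hxy⟩

lemma adj_deleteEdges_of_ne {a b x y : V} (h : G.Adj x y) (hxa : x ≠ a) (hxb : x ≠ b) :
    (G.deleteEdges {s(a, b)}).Adj x y :=
  deleteEdges_adj.mpr ⟨h, fun he ↦ (Sym2.mem_iff.mp (he ▸ Sym2.mem_mk_left x y)).elim hxa hxb⟩

lemma Connected.reachable_deleteEdges_or (hG : G.Connected) (a b x : V) :
    (G.deleteEdges {s(a, b)}).Reachable x a ∨ (G.deleteEdges {s(a, b)}).Reachable x b := by
  set H := G.deleteEdges {s(a, b)}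
  by_contra! hx
  obtain ⟨⟨⟨y, z⟩, hyz⟩, -, hy, hz⟩ := (hG a x).some.exists_boundary_dart
    {v | H.Reachable v a ∨ H.Reachable v b} (.inl .rfl) (by simpa using hx)
  have hzy : H.Adj z y :=
    adj_deleteEdges_of_ne hyz.symm (by rintro rfl; exact hz (.inl .rfl))
      (by rintro rfl; exact hz (.inr .rfl))
  exact hz (hy.imp hzy.reachable.trans hzy.reachable.trans)

section Acyclic

variable (hG : G.IsAcyclic) {a b x y : V} (hab : G.Adj a b)
  (hx : (G.deleteEdges {s(a, b)}).Reachable x a) (hy : (G.deleteEdges {s(a, b)}).Reachable y b)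

include hG hab hx hy

lemma IsAcyclic.ne_of_reachable_deleteEdges : x ≠ y := by
  rintro rfl
  exact isAcyclic_iff_forall_adj_isBridge.mp hG hab (hx.symm.trans hy)

lemma IsAcyclic.mem_edges_of_reachable_deleteEdges (p : G.Walk x y) : s(a, b) ∈ p.edges := by
  by_contra hp
  obtain ⟨q⟩ := reachable_deleteEdges_iff_exists_walk.mpr ⟨p, hp⟩
  exact hG.ne_of_reachable_deleteEdges hab hx (q.reachable.trans hy) rfl

end Acyclic

lemma Connected.dist_eq_add_of_forall_mem_support (hG : G.Connected) {x y m : V}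
    (h : ∀ p : G.Walk x y, m ∈ p.support) : G.dist x y = G.dist x m + G.dist m y := by
  classical
  refine le_antisymm hG.dist_triangle ?_
  obtain ⟨p, hp⟩ := hG.exists_walk_length_eq_dist x y
  calc G.dist x m + G.dist m y
      ≤ (p.takeUntil m (h p)).length + (p.dropUntil m (h p)).length :=
        add_le_add (G.dist_le _) (G.dist_le _)
    _ = G.dist x y := by rw [← Walk.length_append, p.take_spec, hp]

lemma IsAcyclic.dist_eq_dist_add_one_add_dist (hconn : G.Connected) (hacyc : G.IsAcyclic)
    {a b x y : V} (hab : G.Adj a b) (hx : (G.deleteEdges {s(a, b)}).Reachable x a)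
    (hy : (G.deleteEdges {s(a, b)}).Reachable y b) :
    G.dist x y = G.dist x a + 1 + G.dist b y := by
  rw [hconn.dist_eq_add_of_forall_mem_support fun p ↦
      p.fst_mem_support_of_mem_edges (hacyc.mem_edges_of_reachable_deleteEdges hab hx hy p),
    hconn.dist_eq_add_of_forall_mem_support fun p ↦
      p.snd_mem_support_of_mem_edges (hacyc.mem_edges_of_reachable_deleteEdges hab .rfl hy p),
    dist_eq_one_iff_adj.mpr hab, add_assoc]

lemma not_mem_of_dist_le_two {HidS : Set V}
    (hHid : ∀ l₁ ∈ HidS, ∀ l₂ ∈ HidS, l₁ ≠ l₂ → 3 ≤ G.dist l₁ l₂) {l x : V} (hl : l ∈ HidS)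
    (hne : l ≠ x) (h : G.dist l x ≤ 2) : x ∉ HidS :=
  fun hx ↦ by have := hHid l hl x hx hne; omega

section LocallyFinite

variable [G.LocallyFinite] {HidS : Set V} {a b : V}

lemma adj_and_two_le_degree_of_consecutive {x v w y : V} (hxv : G.Adj x v) (hvw : G.Adj v w)
    (hwy : G.Adj w y) (hxw : x ≠ w) (hvy : v ≠ y) (hv : v = a ∨ v = b) (hw : w = a ∨ w = b) :
    G.Adj a b ∧ 2 ≤ G.degree a ∧ 2 ≤ G.degree b := by
  have hdv := two_le_degree_of_adj_of_adj hxv.symm hvw hxw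
  have hdw := two_le_degree_of_adj_of_adj hvw.symm hwy hvy
  rcases hv with rfl | rfl <;> rcases hw with rfl | rfl
  exacts [(hvw.ne rfl).elim, ⟨hvw, hdv, hdw⟩, ⟨hvw.symm, hdw, hdv⟩, (hvw.ne rfl).elim]

lemma mem_of_consecutive_mem_or_eq
    (hHid : ∀ l₁ ∈ HidS, ∀ l₂ ∈ HidS, l₁ ≠ l₂ → 3 ≤ G.dist l₁ l₂)
    (hab : ¬(G.Adj a b ∧ 2 ≤ G.degree a ∧ 2 ≤ G.degree b)) {u v w z t : V}
    (h₁ : G.Adj u v) (h₂ : G.Adj v w) (h₃ : G.Adj w z) (h₄ : G.Adj z t)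
    (huw : u ≠ w) (hvz : v ≠ z) (hwt : w ≠ t) (hv : v ∈ HidS ∨ v = a ∨ v = b)
    (hw : w ∈ HidS ∨ w = a ∨ w = b) (hz : z ∈ HidS ∨ z = a ∨ z = b) : w ∈ HidS := by
  by_contra hwH
  replace hw := hw.resolve_left hwH
  by_cases hvH : v ∈ HidS
  · have hzH := not_mem_of_dist_le_two hHid hvH hvz (dist_le_two_of_adj_of_adj h₂ h₃)
    exact hab (adj_and_two_le_degree_of_consecutive h₂ h₃ h₄ hvz hwt hw (hz.resolve_left hzH))
  · exact hab (adj_and_two_le_degree_of_consecutive h₁ h₂ h₃ huw hvz (hv.resolve_left hvH) hw)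

end LocallyFinite

end SimpleGraph

namespace Gc

open SimpleGraph

variable {V : Type*} {G : SimpleGraph V} {HidS : Set V} {a b : V}

lemma adj_of_dist_le_two {u v : V} (hu : u ∉ HidS) (hv : v ∉ HidS) (hne : u ≠ v)
    (h : G.dist u v ≤ 2) : (Gc G HidS).Adj ⟨u, hu⟩ ⟨v, hv⟩ :=
  ⟨ne_of_apply_ne Subtype.val hne, .inl h⟩

lemma adj_of_mem {u v l : V} (hu : u ∉ HidS) (hv : v ∉ HidS) (hne : u ≠ v) (hl : l ∈ HidS)
    (hul : G.dist u l ≤ 2) (hvl : G.dist v l ≤ 2) : (Gc G HidS).Adj ⟨u, hu⟩ ⟨v, hv⟩ :=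
  ⟨ne_of_apply_ne Subtype.val hne, .inr ⟨l, hl, hul, hvl⟩⟩

section LocallyFinite

variable [G.LocallyFinite]

lemma adj_of_consecutive_mem_or_eq (hab : ¬(G.Adj a b ∧ 2 ≤ G.degree a ∧ 2 ≤ G.degree b))
    {u v w z : V} (hu : u ∉ HidS) (hz : z ∉ HidS) (h₁ : G.Adj u v) (h₂ : G.Adj v w)
    (h₃ : G.Adj w z) (huw : u ≠ w) (hvz : v ≠ z) (huz : u ≠ z)
    (hv : v ∈ HidS ∨ v = a ∨ v = b) (hw : w ∈ HidS ∨ w = a ∨ w = b) :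
    (Gc G HidS).Adj ⟨u, hu⟩ ⟨z, hz⟩ := by
  by_cases hvH : v ∈ HidS
  · exact adj_of_mem hu hz huz hvH (dist_le_two_of_adj h₁)
      (dist_le_two_of_adj_of_adj h₃.symm h₂.symm)
  by_cases hwH : w ∈ HidS
  · exact adj_of_mem hu hz huz hwH (dist_le_two_of_adj_of_adj h₁ h₂) (dist_le_two_of_adj h₃.symm)
  exact (hab (adj_and_two_le_degree_of_consecutive h₁ h₂ h₃ huw hvz (hv.resolve_left hvH)
    (hw.resolve_left hwH))).elim

lemma exists_adj_of_isPath (hHid : ∀ l₁ ∈ HidS, ∀ l₂ ∈ HidS, l₁ ≠ l₂ → 3 ≤ G.dist l₁ l₂)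
    (hab : ¬(G.Adj a b ∧ 2 ≤ G.degree a ∧ 2 ≤ G.degree b)) {u d : V} (hu : u ∉ HidS)
    (hd : ¬(d ∈ HidS ∨ d = a ∨ d = b)) (p : G.Walk u d) (hp : p.IsPath) (hud : u ≠ d) :
    ∃ z : {v // v ∉ HidS}, z.1 ≠ a ∧ z.1 ≠ b ∧
      ∃ q : G.Walk z.1 d, q.IsPath ∧ q.length < p.length ∧ (Gc G HidS).Adj ⟨u, hu⟩ z := by
  cases p with
  | nil => exact absurd rfl hud
  | @cons _ v _ h₁ p =>
  by_cases hv : v ∈ HidS ∨ v = a ∨ v = b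
  swap
  · push Not at hv
    exact ⟨⟨v, hv.1⟩, hv.2.1, hv.2.2, p, hp.of_cons, by simp only [Walk.length_cons]; omega,
      adj_of_dist_le_two hu hv.1 h₁.ne (dist_le_two_of_adj h₁)⟩
  cases p with
  | nil => exact absurd hv hd
  | @cons _ w _ h₂ p =>
  by_cases hw : w ∈ HidS ∨ w = a ∨ w = b
  swap
  · push Not at hw
    have huw : u ≠ w := by simp at hp; grind [Walk.start_mem_support]
    exact ⟨⟨w, hw.1⟩, hw.2.1, hw.2.2, p, hp.of_cons.of_cons,
      by simp only [Walk.length_cons]; omega,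
      adj_of_dist_le_two hu hw.1 huw (dist_le_two_of_adj_of_adj h₁ h₂)⟩
  cases p with
  | nil => exact absurd hw hd
  | @cons _ z _ h₃ p =>
  obtain ⟨huw, hvz, huz⟩ : u ≠ w ∧ v ≠ z ∧ u ≠ z := by
    simp at hp; grind [Walk.start_mem_support]
  by_cases hz : z ∈ HidS ∨ z = a ∨ z = b
  swap
  · push Not at hz
    exact ⟨⟨z, hz.1⟩, hz.2.1, hz.2.2, p, hp.of_cons.of_cons.of_cons,
      by simp only [Walk.length_cons]; omega,
      adj_of_consecutive_mem_or_eq hab hu hz.1 h₁ h₂ h₃ huw hvz huz hv hw⟩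
  cases p with
  | nil => exact absurd hz hd
  | @cons _ t _ h₄ p =>
  obtain ⟨hwt, hut⟩ : w ≠ t ∧ u ≠ t := by simp at hp; grind [Walk.start_mem_support]
  have hwH := mem_of_consecutive_mem_or_eq hHid hab h₁ h₂ h₃ h₄ huw hvz hwt hv hw hz
  by_cases ht : t ∈ HidS ∨ t = a ∨ t = b
  swap
  · push Not at ht
    exact ⟨⟨t, ht.1⟩, ht.2.1, ht.2.2, p, hp.of_cons.of_cons.of_cons.of_cons,
      by simp only [Walk.length_cons]; omega,
      adj_of_mem hu ht.1 hut hwH (dist_le_two_of_adj_of_adj h₁ h₂)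
        (dist_le_two_of_adj_of_adj h₄.symm h₃.symm)⟩
  cases p with
  | nil => exact absurd ht hd
  | @cons _ s _ h₅ p =>
  have hzs : z ≠ s := by simp at hp; grind [Walk.start_mem_support]
  have hzH := mem_of_consecutive_mem_or_eq hHid hab h₂ h₃ h₄ h₅ hvz hwt hzs hw hz ht
  exact (not_mem_of_dist_le_two hHid hwH h₃.ne (dist_le_two_of_adj h₃) hzH).elim

lemma exists_walk_avoiding (hHid : ∀ l₁ ∈ HidS, ∀ l₂ ∈ HidS, l₁ ≠ l₂ → 3 ≤ G.dist l₁ l₂)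
    (hab : ¬(G.Adj a b ∧ 2 ≤ G.degree a ∧ 2 ≤ G.degree b)) (u d : {v // v ∉ HidS})
    (hu : u.1 ≠ a ∧ u.1 ≠ b) (hd : d.1 ≠ a ∧ d.1 ≠ b) (p : G.Walk u.1 d.1) (hp : p.IsPath) :
    ∃ w : (Gc G HidS).Walk u d, ∀ x ∈ w.support, x.1 ≠ a ∧ x.1 ≠ b := by
  induction hn : p.length using Nat.strong_induction_on generalizing u with
  | _ n ih =>
  by_cases hud : u = d
  · subst hud
    exact ⟨.nil, by simpa using hu⟩
  obtain ⟨z, hza, hzb, q, hq, hlt, hadj⟩ := exists_adj_of_isPath hHid hab u.2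
    (by simp [d.2, hd.1, hd.2]) p hp (fun h ↦ hud (Subtype.ext h))
  obtain ⟨w, hw⟩ := ih _ (hn ▸ hlt) z ⟨hza, hzb⟩ q hq rfl
  exact ⟨.cons hadj w, by simpa [hu] using hw⟩

lemma exists_reachable_deleteEdges
    (hHid : ∀ l₁ ∈ HidS, ∀ l₂ ∈ HidS, l₁ ≠ l₂ → 3 ≤ G.dist l₁ l₂)
    (hleaf : ∀ l ∈ HidS, G.degree l ≠ 1) (b : V) (hdeg : 2 ≤ G.degree a) :
    ∃ c : {v // v ∉ HidS}, c.1 ≠ a ∧ (G.deleteEdges {s(a, b)}).Reachable c.1 a := by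
  obtain ⟨x, hax, hxb⟩ := exists_adj_ne_of_two_le_degree hdeg b
  have hxa := adj_deleteEdges_of_ne hax.symm hax.ne.symm hxb
  by_cases hx : x ∈ HidS
  swap
  · exact ⟨⟨x, hx⟩, hax.ne.symm, hxa.reachable⟩
  have hdegx : 2 ≤ G.degree x := by
    have := (G.degree_pos_iff_exists_adj x).mpr ⟨a, hax.symm⟩
    have := hleaf x hx
    omega
  obtain ⟨y, hxy, hya⟩ := exists_adj_ne_of_two_le_degree hdegx a
  have hyx := (adj_deleteEdges_of_ne hxy hax.ne.symm hxb).symm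
  exact ⟨⟨y, not_mem_of_dist_le_two hHid hx hxy.ne (dist_le_two_of_adj hxy)⟩, hya,
    hyx.reachable.trans hxa.reachable⟩

end LocallyFinite

section Tree

variable (hconn : G.Connected) (hacyc : G.IsAcyclic) (ha : a ∉ HidS) (hb : b ∉ HidS)
  (hab : G.Adj a b)

include hconn hacyc ha hb hab

lemma not_adj_of_reachable_deleteEdges {x y : {v // v ∉ HidS}}
    (hx : (G.deleteEdges {s(a, b)}).Reachable x.1 a)
    (hy : (G.deleteEdges {s(a, b)}).Reachable y.1 b) (hxa : x.1 ≠ a) (hyb : y.1 ≠ b) :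
    ¬(Gc G HidS).Adj x y := by
  have hdist {x' y' : V} := @hacyc.dist_eq_dist_add_one_add_dist _ _ hconn a b x' y' hab
  have hxa' := hconn.pos_dist_of_ne hxa
  have hyb' := hconn.pos_dist_of_ne (Ne.symm hyb)
  rintro ⟨-, hxy | ⟨l, hl, hxl, hyl⟩⟩
  · have := hdist hx hy
    omega
  rcases hconn.reachable_deleteEdges_or a b l with hla | hlb
  · have := hdist hla hy
    have := hconn.pos_dist_of_ne (ne_of_mem_of_not_mem hl ha)
    rw [dist_comm] at hyl
    omega
  · have := hdist hx hlb
    have := hconn.pos_dist_of_ne (ne_of_mem_of_not_mem hl hb).symm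
    omega

lemma mem_support_of_reachable_deleteEdges {c d : {v // v ∉ HidS}}
    (hc : (G.deleteEdges {s(a, b)}).Reachable c.1 a)
    (hd : (G.deleteEdges {s(a, b)}).Reachable d.1 b) (w : (Gc G HidS).Walk c d) :
    ⟨a, ha⟩ ∈ w.support ∨ ⟨b, hb⟩ ∈ w.support := by
  by_contra! hw
  obtain ⟨⟨⟨x, y⟩, hxy⟩, hdart, hx, hy⟩ :=
    w.exists_boundary_dart {v | (G.deleteEdges {s(a, b)}).Reachable v.1 a} hc
      fun hda ↦ hacyc.ne_of_reachable_deleteEdges hab hda hd rfl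
  have hyb := (hconn.reachable_deleteEdges_or a b y.1).resolve_left hy
  refine not_adj_of_reachable_deleteEdges hconn hacyc ha hb hab hx hyb ?_ ?_ hxy
  · intro hxa
    obtain rfl : x = ⟨a, ha⟩ := Subtype.ext hxa
    exact hw.1 (w.dart_fst_mem_support_of_mem_darts hdart)
  · intro hyb
    obtain rfl : y = ⟨b, hb⟩ := Subtype.ext hyb
    exact hw.2 (w.dart_snd_mem_support_of_mem_darts hdart)

end Tree

end Gc

theorem separation_iff_nonleaf_edge_general {V : Type*} [Fintype V]
    (G : SimpleGraph V) [DecidableRel G.Adj]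
    (hconn : G.Connected) (hacyc : G.IsAcyclic)
    (HidS : Set V)
    (hHid4 : ∀ l₁ ∈ HidS, ∀ l₂ ∈ HidS, l₁ ≠ l₂ → 4 ≤ G.dist l₁ l₂)
    (hleaf : ∀ l ∈ HidS, ∀ v : V, G.degree v = 1 → 3 ≤ G.dist l v)
    (a b : {v : V // v ∉ HidS}) :
    (∃ c d : {v : V // v ∉ HidS}, c ≠ d ∧ c ≠ a ∧ c ≠ b ∧ d ≠ a ∧ d ≠ b ∧
        ∀ w : (Gc G HidS).Walk c d, a ∈ w.support ∨ b ∈ w.support) ↔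
      (G.Adj a.1 b.1 ∧ 2 ≤ G.degree a.1 ∧ 2 ≤ G.degree b.1) := by
  have hHid : ∀ l₁ ∈ HidS, ∀ l₂ ∈ HidS, l₁ ≠ l₂ → 3 ≤ G.dist l₁ l₂ :=
    fun l₁ h₁ l₂ h₂ hne ↦ (hHid4 l₁ h₁ l₂ h₂ hne).trans' (by norm_num)
  constructor
  · rintro ⟨c, d, -, hca, hcb, hda, hdb, hsep⟩
    by_contra hab
    obtain ⟨p, hp⟩ := (hconn c.1 d.1).exists_isPath
    obtain ⟨w, hw⟩ := Gc.exists_walk_avoiding hHid hab c d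
      ⟨fun h ↦ hca (Subtype.ext h), fun h ↦ hcb (Subtype.ext h)⟩
      ⟨fun h ↦ hda (Subtype.ext h), fun h ↦ hdb (Subtype.ext h)⟩ p hp
    rcases hsep w with h | h
    exacts [(hw a h).1 rfl, (hw b h).2 rfl]
  · rintro ⟨hab, hdega, hdegb⟩
    have hleaf' : ∀ l ∈ HidS, G.degree l ≠ 1 := fun l hl h ↦ by simpa using hleaf l hl l h
    obtain ⟨c, hca, hc⟩ := Gc.exists_reachable_deleteEdges hHid hleaf' b.1 hdega
    obtain ⟨d, hdb, hd⟩ := Gc.exists_reachable_deleteEdges hHid hleaf' a.1 hdegb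
    rw [Sym2.eq_swap] at hd
    have hne {x y : V} := @hacyc.ne_of_reachable_deleteEdges _ _ a.1 b.1 x y hab
    refine ⟨c, d, ne_of_apply_ne Subtype.val (hne hc hd), ne_of_apply_ne Subtype.val hca,
      ne_of_apply_ne Subtype.val (hne hc .rfl), ne_of_apply_ne Subtype.val (hne .rfl hd).symm,
      ne_of_apply_ne Subtype.val hdb,
      Gc.mem_support_of_reachable_deleteEdges hconn hacyc a.2 b.2 hab hc hd⟩

/-- Separation test for true edges among non-leaf observed vertices: there exist
distinct observed `c, d ∉ {a, b}` such that `{a, b}` separates `c` from `d` in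
`G_c` iff `a` and `b` are adjacent in the tree `G_T` and both are non-leaf. -/
theorem separation_iff_nonleaf_edge {V : Type*} [Fintype V] [DecidableEq V]
    (G : SimpleGraph V) [DecidableRel G.Adj]
    (hconn : G.Connected) (hacyc : G.IsAcyclic)
    (HidS : Set V) [DecidablePred (· ∈ HidS)]
    (hHid4 : ∀ l₁ ∈ HidS, ∀ l₂ ∈ HidS, l₁ ≠ l₂ → 4 ≤ G.dist l₁ l₂)
    (hleaf : ∀ l ∈ HidS, ∀ v : V, G.degree v = 1 → 3 ≤ G.dist l v)
    (a b : {v : V // v ∉ HidS}) (hab : a ≠ b) :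
    (∃ c d : {v : V // v ∉ HidS}, c ≠ d ∧ c ≠ a ∧ c ≠ b ∧ d ≠ a ∧ d ≠ b ∧
        ∀ w : (Gc G HidS).Walk c d, a ∈ w.support ∨ b ∈ w.support) ↔
      (G.Adj a.1 b.1 ∧ 2 ≤ G.degree a.1 ∧ 2 ≤ G.degree b.1) :=
  separation_iff_nonleaf_edge_general G hconn hacyc HidS hHid4 hleaf a b
end

section
/- Let c, e ∈ O be observed vertices lying in different connected components of the induced subgraph of G_T on O. Suppose that for every observed b ∈ O adjacent to c in G_T and every observed f ∈ O adjacent to e in G_T, the four vertices b, c, e, f are pairwise adjacent in G_c. Then there exists a hidden vertex d ∈ Hid such that d is adjacent to both c and e in G_T (i.e., c − d − e is a path in G_T). -/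
/-!
Because `c` and `e` are `G_c`-adjacent, some hidden vertex `l` lies within distance 2 of both. The
tree path from `c` to `e` must pass through a hidden vertex, and it runs along the geodesics from
`c` to `l` and from `l` to `e`, so that hidden vertex is within distance 2 of `l`; by the spacing of
hidden vertices it is `l` itself, and `dist c e = dist c l + dist l e`.

If `dist c l = 2`, then `c` is not a leaf, so it has an observed neighbour `b` pointing away from
`e`: `dist b e = dist c e + 1 ≥ 4` and `dist b l = 3`. The `G_c`-adjacency of `b` and `e` then needs
a hidden `l' ≠ l` with `dist b l' ≤ 2` and `dist e l' ≤ 2`; this is impossible, because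
`4 ≤ dist l l' ≤ dist l e + 2` forces `dist l e = 2`, whence `dist b e = 5`. Hence `dist c l = 1`,
and symmetrically `dist e l = 1`.
-/

open SimpleGraph

namespace SimpleGraph

variable {V : Type*} {G : SimpleGraph V}

lemma Walk.dist_add_dist_le_length {u v w : V} (p : G.Walk u v) (hw : w ∈ p.support) :
    G.dist u w + G.dist w v ≤ p.length := by
  classical
  calc G.dist u w + G.dist w v ≤ (p.takeUntil w hw).length + (p.dropUntil w hw).length :=
        add_le_add (dist_le _) (dist_le _)
    _ = p.length := by rw [← Walk.length_append, Walk.take_spec]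

lemma Walk.exists_mem_support_notMem_of_connectedComponentMk_ne {S : Set V} {u v : S}
    (p : G.Walk u v)
    (h : (G.induce S).connectedComponentMk u ≠ (G.induce S).connectedComponentMk v) :
    ∃ w ∈ p.support, w ∉ S := by
  by_contra! hp
  obtain ⟨q⟩ := p.connected_induce_support ⟨u, p.start_mem_support⟩ ⟨v, p.end_mem_support⟩
  exact h (ConnectedComponent.sound ⟨q.map (G.induceHomOfLE hp).toHom⟩)

lemma IsAcyclic.length_eq_dist_of_isPath (hG : G.IsAcyclic) {u v : V} {p : G.Walk u v}
    (hp : p.IsPath) : p.length = G.dist u v := by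
  obtain ⟨q, hq, hlen⟩ := p.reachable.exists_path_of_dist
  rw [← hlen, show p = q from congrArg Subtype.val
    ((hG.subsingleton_path u v).elim (⟨p, hp⟩ : G.Path u v) ⟨q, hq⟩)]

lemma Connected.exists_adj_dist_add_one_eq (hconn : G.Connected) {u v : V} (huv : u ≠ v) :
    ∃ m, G.Adj u m ∧ G.dist m v + 1 = G.dist u v := by
  obtain ⟨p, -, hp⟩ := hconn.exists_path_of_dist u v
  cases p with
  | nil => exact absurd rfl huv
  | cons h q =>
    refine ⟨_, h, le_antisymm ?_ ?_⟩
    · rw [← hp, Walk.length_cons]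
      exact Nat.add_le_add_right (dist_le q) 1
    · calc G.dist u v ≤ G.dist u _ + G.dist _ v := hconn.dist_triangle
        _ = G.dist _ v + 1 := by rw [dist_eq_one_iff_adj.mpr h, add_comm]

lemma IsTree.eq_of_adj_of_dist_add_one_eq (hG : G.IsTree) {u a b x : V}
    (ha : G.Adj u a) (hb : G.Adj u b)
    (hax : G.dist a x + 1 = G.dist u x) (hbx : G.dist b x + 1 = G.dist u x) : a = b := by
  have geodesic_cons : ∀ {c} (h : G.Adj u c), G.dist c x + 1 = G.dist u x →
      ∃ r : G.Path u x, r.1.snd = c := by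
    intro c h hc
    obtain ⟨q, hq⟩ := hG.connected.exists_walk_length_eq_dist c x
    exact ⟨⟨q.cons h, Walk.isPath_of_length_eq_dist _ (by rw [Walk.length_cons, hq, hc])⟩,
      Walk.snd_cons q h⟩
  obtain ⟨ra, rfl⟩ := geodesic_cons ha hax
  obtain ⟨rb, rfl⟩ := geodesic_cons hb hbx
  rw [(hG.isAcyclic.subsingleton_path u x).elim ra rb]

lemma exists_adj_ne_of_degree_ne_one [G.LocallyFinite] {u m : V} (hu : G.degree u ≠ 1)
    (hm : G.Adj u m) : ∃ b, G.Adj u b ∧ b ≠ m := by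
  by_contra! h
  exact hu (degree_eq_one_iff_existsUnique_adj.mpr ⟨m, hm, h⟩)

lemma IsTree.exists_adj_dist_eq_add_one [G.LocallyFinite] (hG : G.IsTree) {u v : V}
    (huv : u ≠ v) (hu : G.degree u ≠ 1) : ∃ b, G.Adj u b ∧ G.dist b v = G.dist u v + 1 := by
  obtain ⟨m, hm, hmv⟩ := hG.connected.exists_adj_dist_add_one_eq huv
  obtain ⟨b, hb, hbm⟩ := exists_adj_ne_of_degree_ne_one hu hm
  refine ⟨b, hb, ?_⟩
  rcases hG.dist_eq_dist_add_one_of_adj v hb with hbv | hbv <;>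
    simp only [G.dist_comm (u := v)] at hbv
  · exact absurd (hG.eq_of_adj_of_dist_add_one_eq hb hm hbv.symm hmv) hbm
  · exact hbv

variable {H : Set V}

lemma exists_notMem_adj_of_adj [G.LocallyFinite]
    (hH : ∀ l₁ ∈ H, ∀ l₂ ∈ H, l₁ ≠ l₂ → 4 ≤ G.dist l₁ l₂)
    (hleaf : ∀ l ∈ H, ∀ v : V, G.degree v = 1 → 3 ≤ G.dist l v) {u x : V} (hx : G.Adj u x) :
    ∃ b ∉ H, G.Adj u b := by
  by_cases hxH : x ∈ H
  · have hdeg : G.degree u ≠ 1 := fun h ↦ by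
      have := hleaf x hxH u h
      rw [G.dist_comm, dist_eq_one_iff_adj.mpr hx] at this
      omega
    obtain ⟨b, hb, hbx⟩ := exists_adj_ne_of_degree_ne_one hdeg hx
    refine ⟨b, fun hbH ↦ ?_, hb⟩
    have := (hH b hbH x hxH hbx).trans (dist_le ((Walk.nil.cons hx).cons hb.symm))
    simp at this
  · exact ⟨x, hxH, hx⟩

lemma exists_mem_dist_le_two_of_gc_adj (hconn : G.Connected) {u v : {x : V // x ∉ H}}
    (huv : (G.induce {x | x ∉ H}).connectedComponentMk u ≠
      (G.induce {x | x ∉ H}).connectedComponentMk v)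
    (h : (Gc G H).Adj u v) : ∃ l ∈ H, G.dist u l ≤ 2 ∧ G.dist v l ≤ 2 := by
  rcases h.2 with huv2 | hl
  · obtain ⟨p, hp⟩ := hconn.exists_walk_length_eq_dist u v
    obtain ⟨l, hlp, hl⟩ := p.exists_mem_support_notMem_of_connectedComponentMk_ne huv
    have := p.dist_add_dist_le_length hlp
    exact ⟨l, not_not.mp hl, by omega, by rw [G.dist_comm]; omega⟩
  · exact hl

lemma dist_add_dist_eq_of_dist_le_two (hG : G.IsTree)
    (hH : ∀ l₁ ∈ H, ∀ l₂ ∈ H, l₁ ≠ l₂ → 4 ≤ G.dist l₁ l₂) {u v : {x : V // x ∉ H}}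
    (huv : (G.induce {x | x ∉ H}).connectedComponentMk u ≠
      (G.induce {x | x ∉ H}).connectedComponentMk v)
    {l : V} (hl : l ∈ H) (hul : G.dist u l ≤ 2) (hvl : G.dist v l ≤ 2) :
    G.dist u l + G.dist l v = G.dist u v := by
  classical
  rw [G.dist_comm] at hvl
  obtain ⟨p₁, hp₁⟩ := hG.connected.exists_walk_length_eq_dist u l
  obtain ⟨p₂, hp₂⟩ := hG.connected.exists_walk_length_eq_dist l v
  set p := (p₁.append p₂).bypass
  -- the hidden vertex that `p` must visit lies within distance 2 of `l`, so it is `l`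
  obtain ⟨d, hdp, hd⟩ := p.exists_mem_support_notMem_of_connectedComponentMk_ne huv
  have hdl : G.dist d l ≤ 2 := by
    rcases (Walk.mem_support_append_iff _ _).mp ((p₁.append p₂).support_bypass_subset_support hdp)
      with hd₁ | hd₂
    · have := p₁.dist_add_dist_le_length hd₁
      omega
    · have := p₂.dist_add_dist_le_length hd₂
      rw [G.dist_comm]
      omega
  obtain rfl : d = l := by
    by_contra hne
    have := hH d (not_not.mp hd) l hl hne
    omega
  have := p.dist_add_dist_le_length hdp
  rw [hG.isAcyclic.length_eq_dist_of_isPath (Walk.bypass_isPath _)] at this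
  exact le_antisymm this hG.connected.dist_triangle

lemma dist_le_one_of_forall_adj_gc_adj [G.LocallyFinite] (hG : G.IsTree)
    (hH : ∀ l₁ ∈ H, ∀ l₂ ∈ H, l₁ ≠ l₂ → 4 ≤ G.dist l₁ l₂)
    (hleaf : ∀ l ∈ H, ∀ v : V, G.degree v = 1 → 3 ≤ G.dist l v) {u v : {x : V // x ∉ H}}
    (huv : (G.induce {x | x ∉ H}).connectedComponentMk u ≠
      (G.induce {x | x ∉ H}).connectedComponentMk v)
    {l : V} (hl : l ∈ H) (hul : G.dist u l ≤ 2) (hvl : G.dist v l ≤ 2)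
    (hadj : ∀ b : {x : V // x ∉ H}, G.Adj u b → (Gc G H).Adj b v) : G.dist u l ≤ 1 := by
  by_contra! hul2
  have hgeod := dist_add_dist_eq_of_dist_le_two hG hH huv hl hul hvl
  have hdeg : G.degree u ≠ 1 := fun h ↦ by
    have := hleaf l hl u h
    rw [G.dist_comm] at this
    omega
  obtain ⟨b, hub, hbv⟩ := hG.exists_adj_dist_eq_add_one (u := u.1) (v := v.1)
    (fun h ↦ huv (congrArg _ (Subtype.ext h))) hdeg
  have hbl : G.dist b l ≤ 3 := by
    have := hG.connected.dist_triangle (u := b) (v := u) (w := l)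
    rw [dist_eq_one_iff_adj.mpr hub.symm] at this
    omega
  have hbH : b ∉ H := fun hbH ↦ by
    have := hH b hbH l hl (by rintro rfl; omega)
    omega
  have hbv_l : G.dist b v ≤ G.dist b l + G.dist l v := hG.connected.dist_triangle
  have hnear : G.dist b v ≤ 2 ∨ ∃ l' ∈ H, G.dist b l' ≤ 2 ∧ G.dist v l' ≤ 2 :=
    (hadj ⟨b, hbH⟩ hub).2
  rcases hnear with hbv2 | ⟨l', hl', hbl', hvl'⟩
  · omega
  · have hbv_l' : G.dist b v ≤ G.dist b l' + G.dist l' v := hG.connected.dist_triangle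
    have hll' : G.dist l l' ≤ G.dist l v + G.dist v l' := hG.connected.dist_triangle
    rw [G.dist_comm (u := l')] at hbv_l'
    obtain rfl | hne := eq_or_ne l l'
    · omega
    · have := hH l hl l' hl' hne
      omega

end SimpleGraph

theorem hidden_node_between_components_general {V : Type*} [Fintype V]
    (G : SimpleGraph V) [DecidableRel G.Adj]
    (hconn : G.Connected) (hacyc : G.IsAcyclic)
    (HidS : Set V)
    (hHid4 : ∀ l₁ ∈ HidS, ∀ l₂ ∈ HidS, l₁ ≠ l₂ → 4 ≤ G.dist l₁ l₂)
    (hleaf : ∀ l ∈ HidS, ∀ v : V, G.degree v = 1 → 3 ≤ G.dist l v)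
    (c e : {v : V // v ∉ HidS})
    (hdiff : (G.induce {v : V | v ∉ HidS}).connectedComponentMk c ≠
      (G.induce {v : V | v ∉ HidS}).connectedComponentMk e)
    (hclique : ∀ b : {v : V // v ∉ HidS}, G.Adj b.1 c.1 →
      ∀ f : {v : V // v ∉ HidS}, G.Adj e.1 f.1 →
        (Gc G HidS).Adj b c ∧ (Gc G HidS).Adj b e ∧ (Gc G HidS).Adj b f ∧
        (Gc G HidS).Adj c e ∧ (Gc G HidS).Adj c f ∧ (Gc G HidS).Adj e f) :
    ∃ d ∈ HidS, G.Adj c.1 d ∧ G.Adj d e.1 := by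
  have hG : G.IsTree := ⟨hconn, hacyc⟩
  have hce : c.1 ≠ e.1 := fun h ↦ hdiff (congrArg _ (Subtype.ext h))
  obtain ⟨x, hcx, -⟩ := hconn.exists_adj_dist_add_one_eq hce
  obtain ⟨y, hey, -⟩ := hconn.exists_adj_dist_add_one_eq hce.symm
  obtain ⟨b, hb, hcb⟩ := exists_notMem_adj_of_adj hHid4 hleaf hcx
  obtain ⟨f, hf, hef⟩ := exists_notMem_adj_of_adj hHid4 hleaf hey
  obtain ⟨l, hl, hcl, hel⟩ := exists_mem_dist_le_two_of_gc_adj hconn hdiff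
    (hclique ⟨b, hb⟩ hcb.symm ⟨f, hf⟩ hef).2.2.2.1
  have hcl1 := dist_le_one_of_forall_adj_gc_adj hG hHid4 hleaf hdiff hl hcl hel
    fun b' hcb' ↦ (hclique b' hcb'.symm ⟨f, hf⟩ hef).2.1
  have hel1 := dist_le_one_of_forall_adj_gc_adj hG hHid4 hleaf hdiff.symm hl hel hcl
    fun f' hef' ↦ (hclique ⟨b, hb⟩ hcb.symm f' hef').2.2.2.2.1.symm
  have hcl0 : G.dist c.1 l ≠ 0 := fun h ↦ c.2 (hconn.dist_eq_zero_iff.mp h ▸ hl)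
  have hel0 : G.dist e.1 l ≠ 0 := fun h ↦ e.2 (hconn.dist_eq_zero_iff.mp h ▸ hl)
  exact ⟨l, hl, dist_eq_one_iff_adj.mp (by omega), (dist_eq_one_iff_adj.mp (by omega)).symm⟩

/-- Hidden-node insertion: if `c` and `e` are observed vertices in different
connected components of the induced observed subgraph of the tree `G_T`, and
every pair of observed tree-neighbors `b` of `c` and `f` of `e` makes
`b, c, e, f` pairwise adjacent in `G_c`, then there is a hidden vertex `d`
adjacent in `G_T` to both `c` and `e` (so `c − d − e` is a path in `G_T`). -/
theorem hidden_node_between_components {V : Type*} [Fintype V] [DecidableEq V]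
    (G : SimpleGraph V) [DecidableRel G.Adj]
    (hconn : G.Connected) (hacyc : G.IsAcyclic)
    (HidS : Set V) [DecidablePred (· ∈ HidS)]
    (hHid4 : ∀ l₁ ∈ HidS, ∀ l₂ ∈ HidS, l₁ ≠ l₂ → 4 ≤ G.dist l₁ l₂)
    (hleaf : ∀ l ∈ HidS, ∀ v : V, G.degree v = 1 → 3 ≤ G.dist l v)
    (c e : {v : V // v ∉ HidS})
    (hdiff : (G.induce {v : V | v ∉ HidS}).connectedComponentMk c ≠
      (G.induce {v : V | v ∉ HidS}).connectedComponentMk e)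
    (hclique : ∀ b : {v : V // v ∉ HidS}, G.Adj b.1 c.1 →
      ∀ f : {v : V // v ∉ HidS}, G.Adj e.1 f.1 →
        (Gc G HidS).Adj b c ∧ (Gc G HidS).Adj b e ∧ (Gc G HidS).Adj b f ∧
        (Gc G HidS).Adj c e ∧ (Gc G HidS).Adj c f ∧ (Gc G HidS).Adj e f) :
    ∃ d ∈ HidS, G.Adj c.1 d ∧ G.Adj d e.1 :=
  hidden_node_between_components_general G hconn hacyc HidS hHid4 hleaf c e hdiff hclique
end
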